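/- arXiv:1601.08145 — 2 statements merged into one kernel-verified Lean document; each statement's English description precedes it below -/
import Mathlib

section
/- Let Γ > 0 and let Δf_a ≤ Δf_b ≤ Δf_c be real numbers. Define (Λ_a, Λ_b, Λ_c) according to the four cases: (1) if 0 ≤ Δf_a, all Λ = 1; (2) if Δf_a < 0 ≤ Δf_b, Λ_a = min{1, Γ/|Δf_a|}, Λ_b = Λ_c = 1; (3) if Δf_b < 0 ≤ Δf_c, Λ_a = Λ_b = min{1, Γ/|Δf_a + Δf_b|}, Λ_c = 1; (4) if Δf_c < 0, Λ_a = Λ_b = Λ_c = min{1, Γ/|Δf_a + Δf_b + Δf_c|}. Then for all (θ_a, θ_b, θ_c) ∈ [0,Λ_a] × [0,Λ_b] × [0,Λ_c], the inequality θ_a Δf_a + θ_b Δf_b + θ_c Δf_c ≥ -Γ holds. -/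
/-!
On `[0, Λ]` the map `θ ↦ θ * f` is minimised at `θ = 0` when `f ≥ 0` and at `θ = Λ` when `f < 0`.
By the ordering the negative flux differences come first, and each case of the limiter gives them
the common bound `Λ = min 1 (Γ / |s|)`, where `s` is their sum; so `θa * fa + θb * fb + θc * fc`
is at least `Λ * s`, and `min 1 (Γ / |s|) * s ≥ -Γ` for every `s`.
-/

theorem neg_le_min_one_div_abs_mul {Γ : ℝ} (hΓ : 0 ≤ Γ) (s : ℝ) :
    -Γ ≤ min 1 (Γ / |s|) * s := by
  have hm : 0 ≤ min 1 (Γ / |s|) := le_min zero_le_one (by positivity)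
  have hscaled : min 1 (Γ / |s|) * |s| ≤ Γ :=
    mul_le_of_le_div₀ hΓ (abs_nonneg s) (min_le_right _ _)
  linarith [mul_le_mul_of_nonneg_left (neg_abs_le s) hm]

theorem mul_le_mul_of_mem_Icc_of_nonpos {θ Λ f : ℝ} (hθ : θ ∈ Set.Icc 0 Λ) (hf : f ≤ 0) :
    Λ * f ≤ θ * f :=
  mul_le_mul_of_nonpos_right hθ.2 hf

/-- The four-case flux limiter: with Γ > 0 and ordered flux differences
Δf_a ≤ Δf_b ≤ Δf_c, the damping coefficients Λ defined case-by-case give a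
cuboid on which θ_a Δf_a + θ_b Δf_b + θ_c Δf_c ≥ -Γ. -/
theorem flux_limiter_feasible
    (Γ fa fb fc : ℝ) (hΓ : 0 < Γ) (hab : fa ≤ fb) (hbc : fb ≤ fc)
    (Λa Λb Λc : ℝ)
    (hdef :
      (0 ≤ fa → Λa = 1 ∧ Λb = 1 ∧ Λc = 1) ∧
      (fa < 0 → 0 ≤ fb → Λa = min 1 (Γ / |fa|) ∧ Λb = 1 ∧ Λc = 1) ∧
      (fb < 0 → 0 ≤ fc →
        Λa = min 1 (Γ / |fa + fb|) ∧ Λb = min 1 (Γ / |fa + fb|) ∧ Λc = 1) ∧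
      (fc < 0 →
        Λa = min 1 (Γ / |fa + fb + fc|) ∧ Λb = min 1 (Γ / |fa + fb + fc|) ∧
          Λc = min 1 (Γ / |fa + fb + fc|))) :
    ∀ θa ∈ Set.Icc (0 : ℝ) Λa, ∀ θb ∈ Set.Icc (0 : ℝ) Λb,
      ∀ θc ∈ Set.Icc (0 : ℝ) Λc,
        θa * fa + θb * fb + θc * fc ≥ -Γ := by
  obtain ⟨-, hcase2, hcase3, hcase4⟩ := hdef
  intro θa ha θb hb θc hc
  have hlimit := neg_le_min_one_div_abs_mul hΓ.le
  rcases le_or_gt 0 fa with hfa | hfa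
  · linarith [mul_nonneg ha.1 hfa, mul_nonneg hb.1 (hfa.trans hab),
      mul_nonneg hc.1 (hfa.trans (hab.trans hbc))]
  rcases le_or_gt 0 fb with hfb | hfb
  · obtain ⟨rfl, -, -⟩ := hcase2 hfa hfb
    linarith [hlimit fa, mul_le_mul_of_mem_Icc_of_nonpos ha hfa.le,
      mul_nonneg hb.1 hfb, mul_nonneg hc.1 (hfb.trans hbc)]
  rcases le_or_gt 0 fc with hfc | hfc
  · obtain ⟨rfl, rfl, -⟩ := hcase3 hfb hfc
    linarith [hlimit (fa + fb), mul_le_mul_of_mem_Icc_of_nonpos ha hfa.le,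
      mul_le_mul_of_mem_Icc_of_nonpos hb hfb.le, mul_nonneg hc.1 hfc]
  · obtain ⟨rfl, rfl, rfl⟩ := hcase4 hfc
    linarith [hlimit (fa + fb + fc), mul_le_mul_of_mem_Icc_of_nonpos ha hfa.le,
      mul_le_mul_of_mem_Icc_of_nonpos hb hfb.le, mul_le_mul_of_mem_Icc_of_nonpos hc hfc.le]
end

section
/- With Γ > 0, flux differences Δf_a ≤ Δf_b ≤ Δf_c, and Λ's defined as in the four-case flux limiter, each Λ lies in [0,1]; in particular the limited scheme reduces to the unlimited high-order scheme (all θ = 1) whenever Δf_a + Δf_b + Δf_c ≥ -Γ and all negative flux differences individually satisfy the worst-case bound. -/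
section LimiterCoefficient

variable {α : Type*} [Field α] [LinearOrder α] [IsStrictOrderedRing α]

lemma min_one_div_abs_mem_Icc {Γ : α} (hΓ : 0 ≤ Γ) (x : α) :
    min 1 (Γ / |x|) ∈ Set.Icc (0 : α) 1 :=
  ⟨le_min zero_le_one (div_nonneg hΓ (abs_nonneg x)), min_le_left _ _⟩

lemma min_one_div_abs_eq_one {Γ x : α} (hx : x ≠ 0) (h : |x| ≤ Γ) :
    min 1 (Γ / |x|) = 1 :=
  min_eq_left <| (one_le_div (abs_pos.mpr hx)).mpr h

end LimiterCoefficient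

/-- The flux-limiter coefficients Λ always lie in [0,1], and the limiter is
inactive (all Λ = 1) whenever the relevant worst-case bounds hold. -/
theorem flux_limiter_coeffs_in_unit_interval
    (Γ fa fb fc : ℝ) (hΓ : 0 < Γ) (hab : fa ≤ fb) (hbc : fb ≤ fc)
    (Λa Λb Λc : ℝ)
    (hdef :
      (0 ≤ fa → Λa = 1 ∧ Λb = 1 ∧ Λc = 1) ∧
      (fa < 0 → 0 ≤ fb → Λa = min 1 (Γ / |fa|) ∧ Λb = 1 ∧ Λc = 1) ∧
      (fb < 0 → 0 ≤ fc →
        Λa = min 1 (Γ / |fa + fb|) ∧ Λb = min 1 (Γ / |fa + fb|) ∧ Λc = 1) ∧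
      (fc < 0 →
        Λa = min 1 (Γ / |fa + fb + fc|) ∧ Λb = min 1 (Γ / |fa + fb + fc|) ∧
          Λc = min 1 (Γ / |fa + fb + fc|))) :
    (Λa ∈ Set.Icc (0 : ℝ) 1 ∧ Λb ∈ Set.Icc (0 : ℝ) 1 ∧
        Λc ∈ Set.Icc (0 : ℝ) 1) ∧
      (fa < 0 → 0 ≤ fb → |fa| ≤ Γ → Λa = 1) ∧
      (fb < 0 → 0 ≤ fc → |fa + fb| ≤ Γ → Λa = 1 ∧ Λb = 1) ∧
      (fc < 0 → |fa + fb + fc| ≤ Γ → Λa = 1 ∧ Λb = 1 ∧ Λc = 1) := by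
  obtain ⟨case1, case2, case3, case4⟩ := hdef
  have one_mem : (1 : ℝ) ∈ Set.Icc (0 : ℝ) 1 := Set.right_mem_Icc.2 zero_le_one
  have coeff_mem := min_one_div_abs_mem_Icc hΓ.le
  refine ⟨?_, ?_, ?_, ?_⟩
  · rcases le_or_gt 0 fa with ha | ha
    · obtain ⟨rfl, rfl, rfl⟩ := case1 ha
      exact ⟨one_mem, one_mem, one_mem⟩
    rcases le_or_gt 0 fb with hb | hb
    · obtain ⟨rfl, rfl, rfl⟩ := case2 ha hb
      exact ⟨coeff_mem _, one_mem, one_mem⟩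
    rcases le_or_gt 0 fc with hc | hc
    · obtain ⟨rfl, rfl, rfl⟩ := case3 hb hc
      exact ⟨coeff_mem _, coeff_mem _, one_mem⟩
    · obtain ⟨rfl, rfl, rfl⟩ := case4 hc
      exact ⟨coeff_mem _, coeff_mem _, coeff_mem _⟩
  · intro ha hb hle
    rw [(case2 ha hb).1, min_one_div_abs_eq_one ha.ne hle]
  · intro hb hc hle
    obtain ⟨rfl, rfl, -⟩ := case3 hb hc
    have hsum : fa + fb < 0 := by linarith
    exact ⟨min_one_div_abs_eq_one hsum.ne hle, min_one_div_abs_eq_one hsum.ne hle⟩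
  · intro hc hle
    obtain ⟨rfl, rfl, rfl⟩ := case4 hc
    have hsum : fa + fb + fc < 0 := by linarith
    have hone := min_one_div_abs_eq_one hsum.ne hle
    exact ⟨hone, hone, hone⟩
end
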